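/- Let F be a field, n ≥ 1, and let A be an (n+1)×(n+1) matrix over F (indices 0,…,n) whose nonzero entries are confined to the diagonal, the first row, and the first column (A i j = 0 whenever i ≠ j, i ≠ 0 and j ≠ 0), with A i i ≠ 0 for all i ≥ 1. Let σ be the reversal permutation σ(i) = n − i and let B be the matrix with entries B i j = A (n−i) (n−j) (a simultaneous row and column reordering of A by σ). Then the nonzero entries of B are confined to the diagonal, the last row, and the last column, and B admits an LU factorization with no fill-in: B = L·U with L lower triangular supported on the diagonal and last row, and U upper triangular with unit diagonal supported on the diagonal and last column. -/
import Mathlib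


/-- Reversing the row and column order of an "arrowhead-first" matrix (nonzeros
confined to the diagonal, first row and first column, with nonzero trailing
diagonal entries) yields an "arrowhead-last" matrix, which admits an LU
factorization with no fill-in: `L` lower triangular supported on the diagonal
and last row, `U` upper triangular with unit diagonal supported on the diagonal
and last column. -/
theorem arrowhead_first_reversed_lu_no_fill_in
    (F : Type*) [Field F] (n : ℕ) (hn : 1 ≤ n)
    (A : Matrix (Fin (n + 1)) (Fin (n + 1)) F)
    (hpattern : ∀ i j : Fin (n + 1), i ≠ j → i ≠ 0 → j ≠ 0 → A i j = 0)
    (hdiag : ∀ i : Fin (n + 1), i ≠ 0 → A i i ≠ 0) :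
    (∀ i j : Fin (n + 1), i ≠ j → i ≠ Fin.last n → j ≠ Fin.last n →
      Matrix.of (fun i j : Fin (n + 1) => A i.rev j.rev) i j = 0) ∧
    ∃ L U : Matrix (Fin (n + 1)) (Fin (n + 1)) F,
      Matrix.of (fun i j : Fin (n + 1) => A i.rev j.rev) = L * U ∧
      (∀ i j : Fin (n + 1), i < j → L i j = 0) ∧
      (∀ i j : Fin (n + 1), i ≠ j → i ≠ Fin.last n → L i j = 0) ∧
      (∀ i j : Fin (n + 1), j < i → U i j = 0) ∧
      (∀ i : Fin (n + 1), U i i = 1) ∧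
      (∀ i j : Fin (n + 1), i ≠ j → j ≠ Fin.last n → U i j = 0) := by
  set B : Matrix (Fin (n + 1)) (Fin (n + 1)) F :=
    Matrix.of (fun i j : Fin (n + 1) => A i.rev j.rev) with hBdef
  have hrev : ∀ i : Fin (n + 1), i ≠ Fin.last n → i.rev ≠ 0 := by
    intro i hi h
    exact hi (Fin.rev_injective (h.trans (Fin.rev_last n).symm))
  have hBdiag : ∀ i : Fin (n + 1), i ≠ Fin.last n → B i i ≠ 0 :=
    fun i hi => hdiag _ (hrev i hi)
  have hBpat : ∀ i j : Fin (n + 1), i ≠ j → i ≠ Fin.last n → j ≠ Fin.last n → B i j = 0 :=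
    fun i j hij hi hj =>
      hpattern _ _ (fun h => hij (Fin.rev_injective h)) (hrev i hi) (hrev j hj)
  refine ⟨hBpat, ?_⟩
  set S : F := ∑ k ∈ Finset.univ.erase (Fin.last n),
      B (Fin.last n) k * (B k (Fin.last n) / B k k) with hS
  set L : Matrix (Fin (n + 1)) (Fin (n + 1)) F := fun i j =>
    if i = Fin.last n then
      (if j = Fin.last n then B (Fin.last n) (Fin.last n) - S else B (Fin.last n) j)
    else (if j = i then B i i else 0) with hL
  set U : Matrix (Fin (n + 1)) (Fin (n + 1)) F := fun i j =>
    if i = j then 1 else if j = Fin.last n then B i (Fin.last n) / B i i else 0 with hU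
  refine ⟨L, U, ?_, ?_, ?_, ?_, ?_, ?_⟩
  · ext i j
    rw [Matrix.mul_apply]
    by_cases hi : i = Fin.last n
    · subst hi
      by_cases hj : j = Fin.last n
      · subst hj
        rw [← Finset.add_sum_erase _ _ (Finset.mem_univ (Fin.last n))]
        have : (∑ k ∈ Finset.univ.erase (Fin.last n), L (Fin.last n) k * U k (Fin.last n)) = S := by
          refine Finset.sum_congr rfl (fun k hk => ?_)
          have hk' : k ≠ Fin.last n := (Finset.mem_erase.mp hk).1
          simp [hL, hU, hk']
        rw [this]
        simp [hL, hU]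
      · rw [Finset.sum_eq_single j]
        · simp [hL, hU, hj]
        · intro k _ hk
          simp [hU, hk, hj]
        · simp
    · rw [Finset.sum_eq_single i]
      · by_cases hij : i = j
        · subst hij
          simp [hL, hU, hi]
        · by_cases hj : j = Fin.last n
          · subst hj
            simp only [hL, hU]
            rw [if_neg hi, if_neg hi]
            simp only [if_true]
            field_simp [hBdiag i hi]
          · rw [hBpat i j hij hi hj]
            simp [hL, hU, hi, hij, hj]
      · intro k _ hk
        simp [hL, hi, hk]
      · simp
  · intro i j hij
    have hi : i ≠ Fin.last n := by
      intro h; subst h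
      exact absurd (hij.trans_le (Fin.le_last j)) (lt_irrefl _)
    simp [hL, hi, hij.ne']
  · intro i j hij hi
    simp [hL, hi, Ne.symm hij]
  · intro i j hji
    have hj : j ≠ Fin.last n := by
      intro h; subst h
      exact absurd (hji.trans_le (Fin.le_last i)) (lt_irrefl _)
    simp [hU, hji.ne', hj]
  · intro i
    simp [hU]
  · intro i j hij hj
    simp [hU, hij, hj]
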